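/- arXiv:2405.07591 — 6 statements merged into one kernel-verified Lean document; each statement's English description precedes it below -/
import Mathlib

section
/- For every game v ∈ Γ^N and every player i ∈ N, the stage-0 Shapley value for partially defined games with costs coincides with the CIS value: φ̃_{i,0}(v) = v({i}) + (v(N) − Σ_{j∈N} v({j}))/n. -/
open Finset

variable {ι : Type*}

/-- The Harsanyi dividend function of a partially defined game `(v, K)`:
`d_{v,K}(∅) = 0`, and for nonempty `S`, `d_{v,K}(S) = v S - ∑_{T ⊊ S} d_{v,K}(T)`
if `S ∈ K`, and `d_{v,K}(S) = 0` otherwise. -/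
noncomputable def dividend [DecidableEq ι] (K : Finset (Finset ι)) (v : Finset ι → ℝ) :
    Finset ι → ℝ
  | S =>
    if S ∈ K ∧ S.Nonempty then
      v S - ∑ T ∈ S.ssubsets.attach, dividend K v T.1
    else 0
  termination_by S => S.card
  decreasing_by exact Finset.card_lt_card (Finset.mem_ssubsets.mp T.2)

/-- `v ∈ Γ^N`: a TU-game (`v ∅ = 0`) with nonnegative worths and `v N > 0`. -/
def GammaN [Fintype ι] (v : Finset ι → ℝ) : Prop :=
  v ∅ = 0 ∧ (∀ S : Finset ι, 0 ≤ v S) ∧ 0 < v Finset.univ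

/-- `L = {{1}, …, {n}, N}`: the singletons together with the grand coalition. -/
def coalL (ι : Type*) [Fintype ι] [DecidableEq ι] : Finset (Finset ι) :=
  (Finset.univ.image fun i : ι => ({i} : Finset ι)) ∪ {Finset.univ}

/-- `K_k = L ∪ {S_1, …, S_k}`: the known coalitions after the `k`-th examination,
for an enumeration `E` of the unknown coalitions. -/
def knownK [Fintype ι] [DecidableEq ι] (E : ℕ → Finset ι) (k : ℕ) : Finset (Finset ι) :=
  coalL ι ∪ (Finset.Icc 1 k).image E

/-- `E` (restricted to `{1, …, m}` with `m = 2^n - n - 2`) is an injective enumeration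
`S_1, …, S_m` of the coalitions in `2^N ∖ (L ∪ {∅})`, i.e. the proper coalitions with
at least two members. -/
def IsEnum [Fintype ι] [DecidableEq ι] (m : ℕ) (E : ℕ → Finset ι) : Prop :=
  m = 2 ^ Fintype.card ι - Fintype.card ι - 2 ∧
  Set.InjOn E (Set.Icc 1 m) ∧
  (∀ l ∈ Set.Icc 1 m, 2 ≤ (E l).card ∧ E l ≠ Finset.univ) ∧
  (∀ T : Finset ι, 2 ≤ T.card → T ≠ Finset.univ → ∃ l ∈ Set.Icc 1 m, E l = T)

/-- The costs satisfy `0 ≤ c_1 ≤ c_2 ≤ … ≤ c_m`. -/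
def CostsOk (m : ℕ) (c : ℕ → ℝ) : Prop :=
  (∀ l ∈ Set.Icc 1 m, 0 ≤ c l) ∧ ∀ l, 1 ≤ l → l + 1 ≤ m → c l ≤ c (l + 1)

/-- The Shapley value for partially defined games with costs:
`φ̃_{i,k}(v) = ∑_{S ⊊ N, i ∈ S} d_{v,K_k}(S)/|S| + (d_{v,K_k}(N) - ∑_{l=1}^k c_l)/n`. -/
noncomputable def phiTilde [Fintype ι] [DecidableEq ι] (E : ℕ → Finset ι) (c : ℕ → ℝ)
    (v : Finset ι → ℝ) (i : ι) (k : ℕ) : ℝ :=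
  (∑ S ∈ Finset.univ.filter (fun S : Finset ι => S ⊂ Finset.univ ∧ i ∈ S),
      dividend (knownK E k) v S / S.card) +
    (dividend (knownK E k) v Finset.univ - ∑ l ∈ Finset.Icc 1 k, c l) / (Fintype.card ι)

/-! At stage 0 only the singletons and the grand coalition are known, so every proper
coalition other than a singleton carries dividend zero. Player `i` then receives the dividend
`v {i}` of its own singleton plus an equal share of the dividend of `N`, which is
`v N - ∑_j v {j}`. -/

lemma dividend_eq [DecidableEq ι] (K : Finset (Finset ι)) (v : Finset ι → ℝ)
    (S : Finset ι) : dividend K v S =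
      if S ∈ K ∧ S.Nonempty then v S - ∑ T ∈ S.ssubsets, dividend K v T else 0 := by
  rw [dividend, ← sum_attach S.ssubsets]

lemma dividend_of_notMem [DecidableEq ι] {K : Finset (Finset ι)} (v : Finset ι → ℝ)
    {S : Finset ι} (hS : S ∉ K) : dividend K v S = 0 := by
  rw [dividend_eq, if_neg fun h => hS h.1]

lemma dividend_singleton [DecidableEq ι] {K : Finset (Finset ι)} (v : Finset ι → ℝ) {j : ι}
    (hj : {j} ∈ K) : dividend K v {j} = v {j} := by
  have hempty : dividend K v ∅ = 0 := by
    rw [dividend_eq, if_neg fun h => Finset.not_nonempty_empty h.2]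
  have hssubsets : ({j} : Finset ι).ssubsets = {∅} := by ext; simp [ssubset_singleton_iff]
  rw [dividend_eq, if_pos ⟨hj, singleton_nonempty j⟩, hssubsets, sum_singleton, hempty,
    sub_zero]

section coalL

variable [Fintype ι] [DecidableEq ι]

lemma mem_coalL {S : Finset ι} : S ∈ coalL ι ↔ (∃ j, S = {j}) ∨ S = univ := by
  simp [coalL, eq_comm, or_comm]

lemma knownK_zero (E : ℕ → Finset ι) : knownK E 0 = coalL ι := by
  simp [knownK]

lemma dividend_coalL_singleton (v : Finset ι → ℝ) (j : ι) :
    dividend (coalL ι) v {j} = v {j} :=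
  dividend_singleton v (mem_coalL.mpr (Or.inl ⟨j, rfl⟩))

lemma dividend_coalL_eq_zero (v : Finset ι → ℝ) {T : Finset ι} (hT : T ≠ univ)
    (hT' : ∀ j, T ≠ {j}) : dividend (coalL ι) v T = 0 :=
  dividend_of_notMem v fun h => (mem_coalL.mp h).elim (fun ⟨j, hj⟩ => hT' j hj) hT

variable [Nontrivial ι]

lemma sum_ssubsets_univ_dividend_coalL (v : Finset ι → ℝ) :
    ∑ T ∈ (univ : Finset ι).ssubsets, dividend (coalL ι) v T = ∑ j, v {j} := by
  have hsub : univ.image (fun j : ι => ({j} : Finset ι)) ⊆ (univ : Finset ι).ssubsets := by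
    simp [subset_iff, ssubset_univ_iff]
  rw [← sum_subset hsub, sum_image fun _ _ _ _ h => singleton_injective h]
  · exact sum_congr rfl fun j _ => dividend_coalL_singleton v j
  · intro T hT hT'
    simp only [mem_image, mem_univ, true_and, not_exists] at hT'
    exact dividend_coalL_eq_zero v (ssubset_univ_iff.mp (mem_ssubsets.mp hT))
      fun j h => hT' j h.symm

lemma dividend_coalL_univ (v : Finset ι → ℝ) :
    dividend (coalL ι) v univ = v univ - ∑ j, v {j} := by
  rw [dividend_eq, if_pos ⟨mem_coalL.mpr (Or.inr rfl), univ_nonempty⟩,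
    sum_ssubsets_univ_dividend_coalL]

lemma sum_proper_coalitions_dividend_coalL (v : Finset ι → ℝ) (i : ι) :
    ∑ S ∈ univ.filter (fun S : Finset ι => S ⊂ univ ∧ i ∈ S),
      dividend (coalL ι) v S / S.card = v {i} := by
  rw [sum_eq_single_of_mem {i} (by simp [ssubset_univ_iff])]
  · simp [dividend_coalL_singleton]
  · intro S hS hSi
    simp only [mem_filter, mem_univ, true_and] at hS
    rw [dividend_coalL_eq_zero v (ssubset_univ_iff.mp hS.1), zero_div]
    rintro j rfl
    exact hSi (by rw [mem_singleton.mp hS.2])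

end coalL

theorem phiTilde_stage_zero_eq_CIS_general [Fintype ι] [DecidableEq ι]
    (hn : 2 ≤ Fintype.card ι)
    (E : ℕ → Finset ι)
    (c : ℕ → ℝ)
    (v : Finset ι → ℝ) (i : ι) :
    phiTilde E c v i 0 =
      v {i} + (v Finset.univ - ∑ j : ι, v {j}) / (Fintype.card ι) := by
  have : Nontrivial ι := Fintype.one_lt_card_iff_nontrivial.mp hn
  rw [phiTilde, knownK_zero, sum_proper_coalitions_dividend_coalL, dividend_coalL_univ]
  simp

/-- For every game `v ∈ Γ^N` and every player `i ∈ N`, the stage-0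
Shapley value for partially defined games with costs coincides with the CIS value:
`φ̃_{i,0}(v) = v({i}) + (v(N) - ∑_{j ∈ N} v({j}))/n`. -/
theorem phiTilde_stage_zero_eq_CIS [Fintype ι] [DecidableEq ι]
    (hn : 2 ≤ Fintype.card ι)
    (m : ℕ) (E : ℕ → Finset ι) (hE : IsEnum m E)
    (c : ℕ → ℝ) (hc : CostsOk m c)
    (v : Finset ι → ℝ) (hv : GammaN v) (i : ι) :
    phiTilde E c v i 0 =
      v {i} + (v Finset.univ - ∑ j : ι, v {j}) / (Fintype.card ι) :=
  phiTilde_stage_zero_eq_CIS_general hn E c v i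
end

section
/- (Additivity of the Shapley value for PDGs with costs.) Let v, w ∈ Γ^N, let φ̃(v) be computed with costs c_1, …, c_m and φ̃(w) with costs c′_1, …, c′_m (both relative to the same enumeration S_1, …, S_m), and let φ̃(v+w) be computed with costs c_l + c′_l, where (v+w)(S) = v(S) + w(S) for all S ⊆ N. Then φ̃_{i,k}(v+w) = φ̃_{i,k}(v) + φ̃_{i,k}(w) for every i ∈ N and every k ∈ {0, 1, …, m}. -/
open Finset

variable {ι : Type*}

lemma dividend_add [DecidableEq ι] (K : Finset (Finset ι)) (v w : Finset ι → ℝ)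
    (S : Finset ι) :
    dividend K (fun S => v S + w S) S = dividend K v S + dividend K w S := by
  induction S using Finset.strongInduction with
  | _ S ih =>
    rw [dividend, dividend, dividend]
    by_cases h : S ∈ K ∧ S.Nonempty
    · simp only [if_pos h]
      rw [Finset.sum_congr rfl fun T _ => ih T.1 (Finset.mem_ssubsets.mp T.2),
        Finset.sum_add_distrib]
      ring
    · simp [h]

/-- **Additivity.** If `φ̃(v)` is computed with costs `c` and `φ̃(w)`
with costs `c'` (relative to the same enumeration), and `φ̃(v+w)` with costs
`c_l + c'_l`, then `φ̃_{i,k}(v+w) = φ̃_{i,k}(v) + φ̃_{i,k}(w)` for every `i ∈ N` and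
every stage `k ∈ {0, 1, …, m}`. -/
theorem phiTilde_additive [Fintype ι] [DecidableEq ι]
    (hn : 2 ≤ Fintype.card ι)
    (m : ℕ) (E : ℕ → Finset ι) (hE : IsEnum m E)
    (c c' : ℕ → ℝ) (hc : CostsOk m c) (hc' : CostsOk m c')
    (v w : Finset ι → ℝ) (hv : GammaN v) (hw : GammaN w)
    (i : ι) (k : ℕ) (hk : k ≤ m) :
    phiTilde E (fun l => c l + c' l) (fun S => v S + w S) i k =
      phiTilde E c v i k + phiTilde E c' w i k := by
  unfold phiTilde
  simp only [dividend_add, add_div, Finset.sum_add_distrib]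
  ring
end

section
/- (Partnership property of the Shapley value for PDGs with costs.) Let v ∈ Γ^N and k ∈ {1, …, m}. If S_k is a partnership of v, i.e., v(T) = 0 for every coalition T ⊆ N that does not contain S_k, then φ̃_{i,k}(v) = φ̃_{j,k}(v) for all i, j ∈ S_k. -/
open Finset

variable {ι : Type*}

lemma dividend_eq_def [DecidableEq ι] (K : Finset (Finset ι)) (v : Finset ι → ℝ)
    (S : Finset ι) :
    dividend K v S =
      if S ∈ K ∧ S.Nonempty then
        v S - ∑ T ∈ S.ssubsets.attach, dividend K v T.1
      else 0 := by
  rw [dividend]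

lemma dividend_zero_of_not_subset [DecidableEq ι] (K : Finset (Finset ι))
    (v : Finset ι → ℝ) (P : Finset ι) (hP : ∀ T, ¬ P ⊆ T → v T = 0) :
    ∀ S : Finset ι, ¬ P ⊆ S → dividend K v S = 0 := by
  intro S
  induction S using Finset.strongInduction with
  | _ S ih =>
    intro hS
    rw [dividend_eq_def]
    split
    · rw [hP S hS, zero_sub, neg_eq_zero]
      apply Finset.sum_eq_zero
      intro T _
      exact ih T.1 (Finset.mem_ssubsets.mp T.2)
        (fun h => hS (h.trans (Finset.mem_ssubsets.mp T.2).subset))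
    · rfl

/-- **Partnership.** Let `v ∈ Γ^N` and `k ∈ {1, …, m}`. If `S_k` is a
partnership of `v`, i.e. `v(T) = 0` for every coalition `T` that does not contain
`S_k`, then `φ̃_{i,k}(v) = φ̃_{j,k}(v)` for all `i, j ∈ S_k`. -/
theorem phiTilde_partnership [Fintype ι] [DecidableEq ι]
    (hn : 2 ≤ Fintype.card ι)
    (m : ℕ) (E : ℕ → Finset ι) (hE : IsEnum m E)
    (c : ℕ → ℝ) (hc : CostsOk m c)
    (v : Finset ι → ℝ) (hv : GammaN v)
    (k : ℕ) (hk1 : 1 ≤ k) (hkm : k ≤ m)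
    (hP : ∀ T : Finset ι, ¬ E k ⊆ T → v T = 0)
    (i j : ι) (hi : i ∈ E k) (hj : j ∈ E k) :
    phiTilde E c v i k = phiTilde E c v j k := by
  have key : ∀ x : ι, x ∈ E k →
      (∑ S ∈ Finset.univ.filter (fun S : Finset ι => S ⊂ Finset.univ ∧ x ∈ S),
        dividend (knownK E k) v S / S.card)
      = ∑ S ∈ Finset.univ.filter (fun S : Finset ι => S ⊂ Finset.univ ∧ E k ⊆ S),
        dividend (knownK E k) v S / S.card := by
    intro x hx
    refine (Finset.sum_subset ?_ ?_).symm
    · intro S hS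
      simp only [Finset.mem_filter] at hS ⊢
      exact ⟨hS.1, hS.2.1, hS.2.2 hx⟩
    · intro S hS hS'
      simp only [Finset.mem_filter] at hS hS'
      have : ¬ E k ⊆ S := fun h => hS' ⟨hS.1, hS.2.1, h⟩
      rw [dividend_zero_of_not_subset _ _ _ hP S this, zero_div]
  unfold phiTilde
  rw [key i hi, key j hj]
end

section
/- (Zero-game property of the Shapley value for PDGs with costs.) Let v ∈ Γ^N and k ∈ {0, 1, …, m}. Assume v(T) = 0 for every T ∈ K_k ∖ {N}, and assume c_l = 0 whenever v(S_l) = 0 (for 1 ≤ l ≤ k). Then φ̃_{i,k}(v) = v(N)/n for every i ∈ N. -/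
open Finset

variable {ι : Type*}

lemma dividend_eq_zero [Fintype ι] [DecidableEq ι] (K : Finset (Finset ι)) (v : Finset ι → ℝ)
    (hz : ∀ T ∈ K, T ≠ Finset.univ → v T = 0) :
    ∀ S : Finset ι, S ≠ Finset.univ → dividend K v S = 0 := by
  intro S
  induction S using Finset.strongInduction with
  | _ S ih =>
    intro hS
    rw [dividend]
    split
    · next h =>
      rw [hz S h.1 hS, Finset.sum_eq_zero, sub_zero]
      rintro ⟨T, hT⟩ -
      have hTS := Finset.mem_ssubsets.mp hT
      exact ih T hTS (fun hTu => hS (Finset.univ_subset_iff.mp (hTu ▸ hTS.subset)))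
    · rfl

/-- **Zero game.** Let `v ∈ Γ^N` and `k ∈ {0, 1, …, m}`. Assume
`v(T) = 0` for every `T ∈ K_k ∖ {N}`, and assume `c_l = 0` whenever `v(S_l) = 0`
(for `1 ≤ l ≤ k`). Then `φ̃_{i,k}(v) = v(N)/n` for every `i ∈ N`. -/
theorem phiTilde_zero_game [Fintype ι] [DecidableEq ι]
    (hn : 2 ≤ Fintype.card ι)
    (m : ℕ) (E : ℕ → Finset ι) (hE : IsEnum m E)
    (c : ℕ → ℝ) (hc : CostsOk m c)
    (v : Finset ι → ℝ) (hv : GammaN v)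
    (k : ℕ) (hkm : k ≤ m)
    (hzero : ∀ T ∈ knownK E k, T ≠ Finset.univ → v T = 0)
    (hczero : ∀ l ∈ Set.Icc 1 k, v (E l) = 0 → c l = 0)
    (i : ι) :
    phiTilde E c v i k = v Finset.univ / (Fintype.card ι) := by
  obtain ⟨hv0, hvnn, hvN⟩ := hv
  have hdz := dividend_eq_zero (knownK E k) v hzero
  have hdN : dividend (knownK E k) v Finset.univ = v Finset.univ := by
    rw [dividend]
    rw [if_pos, Finset.sum_eq_zero, sub_zero]
    · rintro ⟨T, hT⟩ -
      exact hdz T (Finset.mem_ssubsets.mp hT).ne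
    · constructor
      · simp [knownK, coalL]
      · exact Finset.univ_nonempty_iff.mpr (Fintype.card_pos_iff.mp (by omega))
  have hcs : ∀ l ∈ Finset.Icc 1 k, c l = 0 := by
    intro l hl
    rw [Finset.mem_Icc] at hl
    apply hczero l (Set.mem_Icc.mpr hl)
    apply hzero
    · exact Finset.mem_union_right _ (Finset.mem_image.mpr ⟨l, Finset.mem_Icc.mpr hl, rfl⟩)
    · exact (hE.2.2.1 l (Set.mem_Icc.mpr ⟨hl.1, hl.2.trans hkm⟩)).2
  rw [phiTilde, Finset.sum_eq_zero, hdN, Finset.sum_eq_zero hcs, sub_zero, zero_add]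
  intro S hS
  rw [hdz S (Finset.mem_filter.mp hS).2.1.ne, zero_div]
end

section
/- (Symmetric-Partnership property of the Shapley value for PDGs with costs.) Let v ∈ Γ^N and k ∈ {1, …, m}. If P is a p-type coalition of the partially defined game (v, K_k), then φ̃_{i,k}(v) = φ̃_{j,k}(v) for all i, j ∈ P. -/
open Finset

variable {ι : Type*}

/-- `S` is a zero-coalition of `(v, K)`: `v(T) = 0` for every `T ⊆ S` with `T ∈ K`. -/
def ZeroCoalition [DecidableEq ι] (K : Finset (Finset ι)) (v : Finset ι → ℝ)
    (S : Finset ι) : Prop :=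
  ∀ T ⊆ S, T ∈ K → v T = 0

/-- `P` is a p-type coalition of `(v, K)`: `P` is nonempty and for every `S ∈ K` with
`P ∖ S ≠ ∅`, (1) if `S ∖ P ∈ K` then `v(S) = v(S ∖ P)`, and (2) if `S ∖ P ∉ K` then
`S` is a zero-coalition of `(v, K)`. -/
def PType [DecidableEq ι] (K : Finset (Finset ι)) (v : Finset ι → ℝ)
    (P : Finset ι) : Prop :=
  P.Nonempty ∧ ∀ S ∈ K, (P \ S).Nonempty →
    (S \ P ∈ K → v S = v (S \ P)) ∧ (S \ P ∉ K → ZeroCoalition K v S)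

lemma dividend_zero_of_zeroCoalition [DecidableEq ι] (K : Finset (Finset ι))
    (v : Finset ι → ℝ) (S : Finset ι) (hS : ZeroCoalition K v S) :
    ∀ T ⊆ S, dividend K v T = 0 := by
  intro T
  induction T using Finset.strongInduction with
  | _ T ih =>
    intro hTS
    rw [dividend_eq]
    split_ifs with h
    · rw [hS T hTS h.1, zero_sub, neg_eq_zero]
      refine Finset.sum_eq_zero fun U hU => ?_
      have hU' := Finset.mem_ssubsets.mp hU
      exact ih U hU' (hU'.subset.trans hTS)
    · rfl

lemma sum_dividend [DecidableEq ι] (K : Finset (Finset ι)) (v : Finset ι → ℝ)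
    (hv0 : v ∅ = 0) (R : Finset ι) (hR : R ∈ K ∨ R = ∅) :
    ∑ T ∈ R.powerset, dividend K v T = v R := by
  rcases R.eq_empty_or_nonempty with rfl | hne
  · rw [Finset.powerset_empty, Finset.sum_singleton, dividend_eq, hv0]
    simp
  · have hRK : R ∈ K := by
      rcases hR with h | h
      · exact h
      · exact absurd h hne.ne_empty
    have h1 : ∑ T ∈ R.powerset, dividend K v T
        = dividend K v R + ∑ T ∈ R.ssubsets, dividend K v T := by
      rw [Finset.ssubsets, Finset.add_sum_erase _ _ (Finset.mem_powerset_self R)]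
    rw [h1, dividend_eq, if_pos ⟨hRK, hne⟩]; ring

lemma dividend_zero_of_ptype [DecidableEq ι] (K : Finset (Finset ι)) (v : Finset ι → ℝ)
    (hv0 : v ∅ = 0) (P : Finset ι) (hP : PType K v P) :
    ∀ S : Finset ι, (S ∩ P).Nonempty → (P \ S).Nonempty → dividend K v S = 0 := by
  intro S
  induction S using Finset.strongInduction with
  | _ S ih =>
    intro h1 h2
    rw [dividend_eq]
    split_ifs with h
    · obtain ⟨hSK, hSne⟩ := h
      have key := hP.2 S hSK h2
      have hSPsub : S \ P ⊂ S := by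
        obtain ⟨x, hx⟩ := h1
        simp only [Finset.mem_inter] at hx
        refine Finset.ssubset_iff_of_subset (Finset.sdiff_subset) |>.mpr ⟨x, hx.1, ?_⟩
        simp [hx.2]
      have hsum : ∑ T ∈ S.ssubsets, dividend K v T
          = ∑ T ∈ (S \ P).powerset, dividend K v T := by
        symm
        apply Finset.sum_subset
        · intro T hT
          rw [Finset.mem_powerset] at hT
          exact Finset.mem_ssubsets.mpr (hT.trans_ssubset hSPsub)
        · intro T hT hT'
          rw [Finset.mem_ssubsets] at hT
          rw [Finset.mem_powerset] at hT'
          obtain ⟨x, hxT, hxP⟩ : ∃ x ∈ T, x ∈ P := by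
            by_contra hcon
            push_neg at hcon
            exact hT' fun y hy => Finset.mem_sdiff.mpr ⟨hT.subset hy, hcon y hy⟩
          refine ih T hT ⟨x, Finset.mem_inter.mpr ⟨hxT, hxP⟩⟩ ?_
          obtain ⟨y, hy⟩ := h2
          rw [Finset.mem_sdiff] at hy
          exact ⟨y, Finset.mem_sdiff.mpr ⟨hy.1, fun hyT => hy.2 (hT.subset hyT)⟩⟩
      rw [hsum]
      by_cases hSP : S \ P ∈ K
      · rw [key.1 hSP, ← sum_dividend K v hv0 (S \ P) (Or.inl hSP)]
        ring
      · have hzero := key.2 hSP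
        rw [hzero S Finset.Subset.rfl hSK]
        rw [Finset.sum_eq_zero, sub_zero]
        intro T hT
        rw [Finset.mem_powerset] at hT
        exact dividend_zero_of_zeroCoalition K v S hzero T (hT.trans Finset.sdiff_subset)
    · rfl

/-- **Symmetric-Partnership.** Let `v ∈ Γ^N` and `k ∈ {1, …, m}`.
If `P` is a p-type coalition of the partially defined game `(v, K_k)`, then
`φ̃_{i,k}(v) = φ̃_{j,k}(v)` for all `i, j ∈ P`. -/
theorem phiTilde_symmetric_partnership [Fintype ι] [DecidableEq ι]
    (hn : 2 ≤ Fintype.card ι)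
    (m : ℕ) (E : ℕ → Finset ι) (hE : IsEnum m E)
    (c : ℕ → ℝ) (hc : CostsOk m c)
    (v : Finset ι → ℝ) (hv : GammaN v)
    (k : ℕ) (hk1 : 1 ≤ k) (hkm : k ≤ m)
    (P : Finset ι) (hP : PType (knownK E k) v P)
    (i j : ι) (hi : i ∈ P) (hj : j ∈ P) :
    phiTilde E c v i k = phiTilde E c v j k := by
  have key : ∀ a b : ι, a ∈ P → b ∈ P →
      ∑ S ∈ Finset.univ.filter (fun S : Finset ι => S ⊂ Finset.univ ∧ a ∈ S),
        dividend (knownK E k) v S / S.card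
      = ∑ S ∈ Finset.univ.filter (fun S : Finset ι => S ⊂ Finset.univ ∧ a ∈ S ∧ b ∈ S),
        dividend (knownK E k) v S / S.card := by
    intro a b ha hb
    symm
    apply Finset.sum_subset
    · intro S hS
      simp only [Finset.mem_filter] at hS ⊢
      exact ⟨hS.1, hS.2.1, hS.2.2.1⟩
    · intro S hS hS'
      simp only [Finset.mem_filter, Finset.mem_univ, true_and] at hS hS'
      have hbS : b ∉ S := fun h => hS' ⟨hS.1, hS.2, h⟩
      have hdz : dividend (knownK E k) v S = 0 := by
        refine dividend_zero_of_ptype _ _ hv.1 P hP S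
          ⟨a, Finset.mem_inter.mpr ⟨hS.2, ha⟩⟩
          ⟨b, Finset.mem_sdiff.mpr ⟨hb, hbS⟩⟩
      rw [hdz, zero_div]
  have hfilt : Finset.univ.filter (fun S : Finset ι => S ⊂ Finset.univ ∧ i ∈ S ∧ j ∈ S)
      = Finset.univ.filter (fun S : Finset ι => S ⊂ Finset.univ ∧ j ∈ S ∧ i ∈ S) := by
    apply Finset.filter_congr
    intro S _
    tauto
  unfold phiTilde
  rw [key i j hi hj, key j i hj hi, hfilt]
end

section
/- (Theorem 3: the all-examining rule is the unique order-independent indicator.) Assume n ≥ 3. Let Π assign to each game v ∈ Γ^{N,α} and each enumeration O (a bijection from {1,…,m} to 2^N ∖ (L ∪ {∅})) a vector Π(v, O) ∈ {0,1}^m, satisfying: (monotone exit) if Π_k(v, O) = 1 and k < m then Π_{k+1}(v, O) = 1; (Axiom on sums) Π_k(v + w, O) = max(Π_k(v, O), Π_k(w, O)) for all v, w ∈ Γ^{N,α}, all enumerations O and all k, where (v+w)(S) = v(S) + w(S) for S ≠ N and (v+w)(N) = α; (Axiom on uninformative examinations) for every k ∈ {2, …, m}, if v(O(k−1)) = 0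 then Π_k(v, O) = 0; (Order independence) Π(v, O) = Π(v, O′) for all enumerations O, O′. Then Π_k(v, O) = 0 for all v ∈ Γ^{N,α}, all enumerations O, and all k ∈ {1, …, m}; that is, Π coincides with the indicator γ^A defined by γ^A_k(v) = 0 for all k. -/
open Finset

variable {ι : Type*}

/-- `v ∈ Γ^{N,α}`: a TU-game with nonnegative worths and `v N = α`. -/
def GammaNA [Fintype ι] (α : ℝ) (v : Finset ι → ℝ) : Prop :=
  v ∅ = 0 ∧ (∀ S : Finset ι, 0 ≤ v S) ∧ v Finset.univ = α

open scoped Classical in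
/-- The indicator function `γ`: `γ_k(v) = 1` if `k ≥ 2` and
`v(S_{k-1}) ≥ v(N) - ∑_{l=1}^{k-1} c_l`, and `γ_k(v) = 0` otherwise.
Here `E` enumerates the unknown coalitions and `c` gives the costs of `v`. -/
noncomputable def gammaInd [Fintype ι] (E : ℕ → Finset ι) (c : ℕ → ℝ)
    (v : Finset ι → ℝ) (k : ℕ) : ℕ :=
  if 2 ≤ k ∧ v Finset.univ - ∑ l ∈ Finset.Icc 1 (k - 1), c l ≤ v (E (k - 1)) then 1
  else 0

lemma my_pow_bound (n : ℕ) (h : 3 ≤ n) : n + 4 ≤ 2 ^ n := by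
  induction n, h using Nat.le_induction with
  | base => norm_num
  | succ n hn ih => rw [pow_succ]; omega

lemma my_swap_mem {m a b : ℕ} (ha : a ∈ Set.Icc 1 m) (hb : b ∈ Set.Icc 1 m)
    {l : ℕ} (hl : l ∈ Set.Icc 1 m) : Equiv.swap a b l ∈ Set.Icc 1 m := by
  rw [Equiv.swap_apply_def]
  simp only [Set.mem_Icc] at *
  split_ifs <;> omega

lemma my_swap_isEnum [Fintype ι] [DecidableEq ι] {m a b : ℕ} {E : ℕ → Finset ι}
    (hE : IsEnum m E) (ha : a ∈ Set.Icc 1 m) (hb : b ∈ Set.Icc 1 m) :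
    IsEnum m (E ∘ Equiv.swap a b) := by
  obtain ⟨h1, h2, h3, h4⟩ := hE
  refine ⟨h1, ?_, ?_, ?_⟩
  · intro x hx y hy hxy
    have := h2 (my_swap_mem ha hb hx) (my_swap_mem ha hb hy) hxy
    exact (Equiv.swap a b).injective this
  · intro l hl
    exact h3 _ (my_swap_mem ha hb hl)
  · intro T hT hT'
    obtain ⟨l, hl, hlT⟩ := h4 T hT hT'
    refine ⟨Equiv.swap a b l, my_swap_mem ha hb hl, ?_⟩
    simp [hlT]

/-- **Theorem 3: the all-examining rule is the unique order-independent
indicator.** If `Π` assigns to each game `v ∈ Γ^{N,α}` and each enumeration `O` a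
vector in `{0,1}^m` satisfying monotone exit, the sum axiom
`Π_k(v+w, O) = max(Π_k(v, O), Π_k(w, O))`, the uninformative-examination axiom, and
order independence, then `Π_k(v, O) = 0` for all `v`, `O`, `k`; that is, `Π`
coincides with `γ^A`. -/
theorem indicator_order_independent_eq_gammaA [Fintype ι] [DecidableEq ι]
    (hn : 3 ≤ Fintype.card ι)
    (α : ℝ) (hα : 0 < α)
    (m : ℕ) (hm : m = 2 ^ Fintype.card ι - Fintype.card ι - 2)
    (Pi : (Finset ι → ℝ) → (ℕ → Finset ι) → ℕ → ℕ)
    (hbool : ∀ v : Finset ι → ℝ, GammaNA α v → ∀ O : ℕ → Finset ι, IsEnum m O →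
      ∀ k ∈ Set.Icc 1 m, Pi v O k = 0 ∨ Pi v O k = 1)
    (hexit : ∀ v : Finset ι → ℝ, GammaNA α v → ∀ O : ℕ → Finset ι, IsEnum m O →
      ∀ k, 1 ≤ k → k < m → Pi v O k = 1 → Pi v O (k + 1) = 1)
    (hsum : ∀ v w : Finset ι → ℝ, GammaNA α v → GammaNA α w →
      ∀ O : ℕ → Finset ι, IsEnum m O → ∀ k ∈ Set.Icc 1 m,
      Pi (fun S => if S = Finset.univ then α else v S + w S) O k =
        max (Pi v O k) (Pi w O k))
    (huninf : ∀ v : Finset ι → ℝ, GammaNA α v → ∀ O : ℕ → Finset ι, IsEnum m O →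
      ∀ k, 2 ≤ k → k ≤ m → v (O (k - 1)) = 0 → Pi v O k = 0)
    (hord : ∀ v : Finset ι → ℝ, GammaNA α v →
      ∀ O O' : ℕ → Finset ι, IsEnum m O → IsEnum m O' →
      ∀ k ∈ Set.Icc 1 m, Pi v O k = Pi v O' k) :
    ∀ v : Finset ι → ℝ, GammaNA α v → ∀ O : ℕ → Finset ι, IsEnum m O →
      ∀ k ∈ Set.Icc 1 m, Pi v O k = 0 := by
  have hm2 : 2 ≤ m := by
    have h4 := my_pow_bound (Fintype.card ι) hn
    obtain ⟨P, hP⟩ : ∃ P, P = 2 ^ Fintype.card ι := ⟨_, rfl⟩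
    rw [← hP] at hm h4
    omega
  intro v hv O hO
  have main : ∀ k, 2 ≤ k → k ≤ m → Pi v O k = 0 := by
    intro k hk2 hkm
    have ha : k - 1 ∈ Set.Icc 1 m := by simp only [Set.mem_Icc]; omega
    obtain ⟨hScard, hSuniv⟩ := hO.2.2.1 _ ha
    have hSne : O (k - 1) ≠ ∅ := by
      intro h; rw [h] at hScard; simp at hScard
    have hne : (∅ : Finset ι) ≠ Finset.univ := by
      have : Nonempty ι := Fintype.card_pos_iff.mp (by omega)
      simpa using (Finset.univ_nonempty (α := ι)).ne_empty.symm
    have hv1 : GammaNA α (fun X => if X = O (k - 1) then 0 else v X) := by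
      refine ⟨?_, ?_, ?_⟩
      · simp only
        split_ifs with h
        · rfl
        · exact hv.1
      · intro X
        simp only
        split_ifs
        · exact le_rfl
        · exact hv.2.1 X
      · simp only
        rw [if_neg (Ne.symm hSuniv)]
        exact hv.2.2
    have hv2 : GammaNA α (fun X => if X = Finset.univ then α
        else if X = O (k - 1) then v (O (k - 1)) else 0) := by
      refine ⟨?_, ?_, ?_⟩
      · simp only
        rw [if_neg hne, if_neg (Ne.symm hSne)]
      · intro X
        simp only
        split_ifs
        · exact le_of_lt hα
        · exact hv.2.1 _
        · exact le_rfl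
      · simp
    have hsplit : (fun X => if X = Finset.univ then α else
        (if X = O (k - 1) then 0 else v X) +
        (if X = Finset.univ then α else if X = O (k - 1) then v (O (k - 1)) else 0)) = v := by
      funext X
      by_cases hX : X = Finset.univ
      · rw [if_pos hX, hX, hv.2.2]
      · rw [if_neg hX, if_neg hX]
        by_cases hXS : X = O (k - 1)
        · rw [if_pos hXS, if_pos hXS, hXS]; ring
        · rw [if_neg hXS, if_neg hXS]; ring
    have hk' : k ∈ Set.Icc 1 m := by simp only [Set.mem_Icc]; omega
    have h1 : Pi (fun X => if X = O (k - 1) then 0 else v X) O k = 0 := by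
      apply huninf _ hv1 O hO k hk2 hkm
      simp
    have h2 : Pi (fun X => if X = Finset.univ then α
        else if X = O (k - 1) then v (O (k - 1)) else 0) O k = 0 := by
      have hj : (if k - 1 = 1 then 2 else 1) ∈ Set.Icc 1 m := by
        simp only [Set.mem_Icc]; split_ifs <;> omega
      set j : ℕ := if k - 1 = 1 then 2 else 1 with hjdef
      have hja : j ≠ k - 1 := by
        simp only [hjdef]; split_ifs with h <;> omega
      have hOj : O j ≠ O (k - 1) := by
        intro h
        exact hja (hO.2.1 hj ha h)
      have hO' : IsEnum m (O ∘ Equiv.swap (k - 1) j) := my_swap_isEnum hO ha hj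
      have h0 : Pi (fun X => if X = Finset.univ then α
          else if X = O (k - 1) then v (O (k - 1)) else 0) (O ∘ Equiv.swap (k - 1) j) k = 0 := by
        apply huninf _ hv2 _ hO' k hk2 hkm
        show (if O (Equiv.swap (k - 1) j (k - 1)) = Finset.univ then α
          else if O (Equiv.swap (k - 1) j (k - 1)) = O (k - 1) then v (O (k - 1)) else 0) = 0
        rw [Equiv.swap_apply_left]
        rw [if_neg (hO.2.2.1 j hj).2, if_neg hOj]
      rw [hord _ hv2 O _ hO hO' k hk', h0]
    calc Pi v O k
        = Pi (fun X => if X = Finset.univ then α else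
            (if X = O (k - 1) then 0 else v X) +
            (if X = Finset.univ then α else if X = O (k - 1) then v (O (k - 1)) else 0)) O k := by
          rw [hsplit]
      _ = max (Pi (fun X => if X = O (k - 1) then 0 else v X) O k)
            (Pi (fun X => if X = Finset.univ then α
              else if X = O (k - 1) then v (O (k - 1)) else 0) O k) :=
          hsum _ _ hv1 hv2 O hO k hk'
      _ = 0 := by rw [h1, h2]; simp
  intro k hk
  simp only [Set.mem_Icc] at hk
  rcases Nat.lt_or_ge k 2 with hk2 | hk2
  · have hk1 : k = 1 := by omega
    subst hk1
    rcases hbool v hv O hO 1 (by simp only [Set.mem_Icc]; omega) with h | h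
    · exact h
    · have h1 := hexit v hv O hO 1 le_rfl (by omega) h
      have h2 := main 2 le_rfl hm2
      norm_num at h1
      omega
  · exact main k hk2 hk.2
end
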